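/- For all n >= 1 and k >= 0: μ(N|_{2n}, k, J*) ≡ 0 (mod 2) if k is odd, and μ(N|_{2n}, k, J*) ≡ μ(P|_n, k/2, J*) (mod 2) if k is even. -/

import Mathlib

/-- `P = {k : k ≡ 0 or 3 (mod 4)}`. -/
def Pset : Set ℕ := {k | k % 4 = 0 ∨ k % 4 = 3}

/-- `Q = {k : k ≡ 1 or 2 (mod 4)}`. -/
def Qset : Set ℕ := {k | k % 4 = 1 ∨ k % 4 = 2}

/-- `J = {(2n+1)·4^j − 1 : n, j ≥ 0}`. -/
def Jset : Set ℕ := {m | ∃ n j : ℕ, (2 * n + 1) * 4 ^ j - 1 = m}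

/-- `J* = {(2n+1)·4^j − 1 : n ≥ 0, j ≥ 1}`. -/
def Jstar : Set ℕ := {m | ∃ n j : ℕ, 1 ≤ j ∧ (2 * n + 1) * 4 ^ j - 1 = m}

/-- `L = ℕ \ J*`. -/
def Lset : Set ℕ := Jstarᶜ

/-- `A|_m`: the finite set of the `m` smallest elements of `A`. -/
noncomputable def smallest (A : Set ℕ) (m : ℕ) : Finset ℕ :=
  (Finset.range m).image (Nat.nth (· ∈ A))

/-- The map `β`: `β l = 2l` if `l` even, `2l + 1` if `l` odd. -/
def beta (l : ℕ) : ℕ := if Even l then 2 * l else 2 * l + 1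

/-- `μ(A, k, B)`: the number of involutions of the finite set `A` (permutations of `ℕ`
fixing everything outside `A` and equal to their own inverse) having exactly `k`
transpositions, all of whose transpositions `(c, d)` satisfy `c + d ∈ B`. -/
noncomputable def mu (A : Finset ℕ) (k : ℕ) (B : Set ℕ) : ℕ :=
  Nat.card {σ : Equiv.Perm ℕ // σ * σ = 1 ∧ (∀ x, σ x ≠ x → x ∈ A) ∧
    (A.filter fun x => σ x ≠ x).card = 2 * k ∧ ∀ c, σ c ≠ c → c + σ c ∈ B}

/-!
Conjugation by `pairSwap = (0 1)(2 3)(4 5)⋯` is an involution on the involutions counted by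
`μ(N|_{2n}, k, J*)`: it preserves `range (2n)` and every odd sum `c + d`. Modulo 2 only its fixed
points count, the involutions commuting with `pairSwap`. As every element of `J*` is `≡ 3 (mod 4)`,
such an involution either fixes a block `{2a, 2a+1}` pointwise or swaps it crosswise with another
block `{2b, 2b+1}` (`2a ↔ 2b+1`, `2a+1 ↔ 2b`), so it is the `double` of an involution of `range n`
whose transpositions `(a, b)` satisfy `2(a+b)+1 ∈ J*`, with half as many moved points; in
particular `k` is even. Finally `β` maps `range n` onto `P|_n` and, for sets of numbers
`≡ 3 (mod 4)`, `β a + β b ∈ J*` iff `2(a+b)+1 ∈ J*`, so transport along `β` identifies these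
involutions with those counted by `μ(P|_n, k/2, J*)`.
-/

open Finset Function

lemma beta_eq (l : ℕ) : beta l = 2 * l + l % 2 := by
  simp only [beta, Nat.even_iff]; split <;> omega

lemma beta_div_two (l : ℕ) : beta l / 2 = l := by rw [beta_eq]; omega

lemma beta_strictMono : StrictMono beta := fun a b h => by rw [beta_eq, beta_eq]; omega

lemma beta_injective : Injective beta := beta_strictMono.injective

lemma beta_mem_Pset (l : ℕ) : beta l ∈ Pset := by
  simp only [Pset, Set.mem_ofPred_eq, beta_eq]
  rcases Nat.mod_two_eq_zero_or_one l with h | h <;> omega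

lemma nth_Pset (i : ℕ) : Nat.nth (· ∈ Pset) i = beta i := by
  have hP : ∀ m ∈ Pset, m ∈ Set.range beta := fun m hm =>
    ⟨m / 2, by rw [beta_eq]; simp only [Pset, Set.mem_ofPred_eq] at hm; omega⟩
  have hinf : Pset.Infinite :=
    (Set.infinite_range_of_injective beta_injective).mono <| by
      rintro _ ⟨l, rfl⟩; exact beta_mem_Pset l
  have h := Nat.nth_comp_of_strictMono (n := i) beta_strictMono hP fun hf => absurd hf hinf
  simpa [beta_mem_Pset, Nat.nth_of_forall] using h.symm

lemma smallest_Pset (n : ℕ) : smallest Pset n = (range n).image beta :=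
  image_congr fun i _ => nth_Pset i

lemma mod_four_of_mem_Jstar {m : ℕ} (hm : m ∈ Jstar) : m % 4 = 3 := by
  obtain ⟨a, j, hj, rfl⟩ := hm
  obtain ⟨c, hc⟩ : 4 ∣ (2 * a + 1) * 4 ^ j := dvd_mul_of_dvd_right (dvd_pow_self 4 (by omega)) _
  have : 0 < (2 * a + 1) * 4 ^ j := by positivity
  omega

lemma beta_add_beta_mem_iff {B : Set ℕ} (hB : ∀ m ∈ B, m % 4 = 3) (a b : ℕ) :
    beta a + beta b ∈ B ↔ 2 * (a + b) + 1 ∈ B := by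
  rw [beta_eq, beta_eq]
  by_cases h : (a + b) % 2 = 1
  · rw [show 2 * a + a % 2 + (2 * b + b % 2) = 2 * (a + b) + 1 by omega]
  · exact iff_of_false (fun hm => by have := hB _ hm; omega) (fun hm => by have := hB _ hm; omega)

lemma Set.ncard_modEq_ncard_fixed_of_involutive {α : Type*} {s : Set α} (hs : s.Finite)
    {φ : α → α} (hφ : Involutive φ) (hmaps : Set.MapsTo φ s s) :
    s.ncard ≡ {x ∈ s | φ x = x}.ncard [MOD 2] := by
  classical
  have := hs.fintype
  have h := Equiv.Perm.card_fixedPoints_modEq (p := 2) (n := 1) (f := hmaps.restrict) <|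
    funext fun x => Subtype.ext (hφ x)
  rw [← Nat.card_coe_set_eq, ← Nat.card_coe_set_eq, Nat.card_eq_fintype_card]
  convert h using 1
  rw [← Nat.card_eq_fintype_card, Nat.card_coe_set_eq, Nat.card_coe_set_eq,
    ← Set.ncard_image_of_injective _ Subtype.val_injective]
  congr 1
  ext x
  simp [Function.IsFixedPt, Subtype.ext_iff, Set.MapsTo.restrict, Subtype.map, and_comm]

structure IsSumInvolution (A : Finset ℕ) (B : Set ℕ) (f : ℕ → ℕ) : Prop where
  involutive : Involutive f
  mem_of_ne : ∀ x, f x ≠ x → x ∈ A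
  add_mem : ∀ c, f c ≠ c → c + f c ∈ B

def sumInvolutions (A : Finset ℕ) (k : ℕ) (B : Set ℕ) : Set (ℕ → ℕ) :=
  {f | IsSumInvolution A B f ∧ #{x ∈ A | f x ≠ x} = 2 * k}

lemma mu_eq_ncard (A : Finset ℕ) (k : ℕ) (B : Set ℕ) :
    mu A k B = (sumInvolutions A k B).ncard := by
  rw [← Nat.card_coe_set_eq]
  refine Nat.card_congr
    { toFun := fun σ => ⟨σ.1, ⟨⟨fun x => ?_, σ.2.2.1, σ.2.2.2.2⟩, σ.2.2.2.1⟩⟩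
      invFun := fun f => ⟨f.2.1.involutive.toPerm, ?_⟩
      left_inv := fun σ => Subtype.ext (Equiv.ext fun _ => rfl)
      right_inv := fun f => rfl }
  · rw [← Equiv.Perm.mul_apply, σ.2.1, Equiv.Perm.one_apply]
  · obtain ⟨⟨hinv, hmem, hadd⟩, hcard⟩ := f.2
    exact ⟨Equiv.ext hinv, hmem, hcard, hadd⟩

namespace IsSumInvolution

variable {A : Finset ℕ} {B : Set ℕ} {f : ℕ → ℕ}

lemma apply_mem (hf : IsSumInvolution A B f) {x : ℕ} (hx : x ∈ A) : f x ∈ A := by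
  by_cases h : f x = x
  · rwa [h]
  · exact hf.mem_of_ne _ (by rwa [hf.involutive, ne_comm])

lemma eq_of_not_mem (hf : IsSumInvolution A B f) {x : ℕ} (hx : x ∉ A) : f x = x :=
  not_not.1 (mt (hf.mem_of_ne x) hx)

lemma even_card_moved (hf : IsSumInvolution A B f) : Even #{x ∈ A | f x ≠ x} := by
  have h := Set.ncard_modEq_ncard_fixed_of_involutive (s := ↑{x ∈ A | f x ≠ x})
    (Finset.finite_toSet _) hf.involutive fun x hx => by
      simp only [coe_filter, Set.mem_ofPred_eq] at hx ⊢
      exact ⟨hf.apply_mem hx.1, by rw [hf.involutive]; exact hx.2.symm⟩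
  rw [Set.ncard_coe_finset] at h
  have hempty : {x ∈ (↑{x ∈ A | f x ≠ x} : Set ℕ) | f x = x} = ∅ := by
    ext x; simp +contextual
  rw [hempty, Set.ncard_empty] at h
  exact Nat.even_iff.2 h

lemma conj (hf : IsSumInvolution A B f) {g : ℕ → ℕ} (hg : Involutive g)
    (hA : ∀ x ∈ A, g x ∈ A) (hB : ∀ c d, c + d ∈ B → g c + g d = c + d) :
    IsSumInvolution A B (g ∘ f ∘ g) := by
  have hmoved : ∀ x, (g ∘ f ∘ g) x ≠ x ↔ f (g x) ≠ g x := fun x => by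
    simp only [comp_apply]; rw [← hg.injective.ne_iff, hg]
  refine ⟨fun x => by simp only [comp_apply, hg _, hf.involutive _], fun x hx => ?_, fun c hc => ?_⟩
  · rw [← hg x]; exact hA _ (hf.mem_of_ne _ ((hmoved x).1 hx))
  · have h := hB _ _ (hf.add_mem _ ((hmoved c).1 hc))
    rw [hg] at h
    simpa only [comp_apply, h] using hf.add_mem _ ((hmoved c).1 hc)

end IsSumInvolution

lemma card_moved_conj {A : Finset ℕ} {f g : ℕ → ℕ} (hg : Involutive g) (hA : ∀ x ∈ A, g x ∈ A) :
    #{x ∈ A | (g ∘ f ∘ g) x ≠ x} = #{x ∈ A | f x ≠ x} := by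
  refine card_nbij' g g (fun x hx => ?_) (fun x hx => ?_) (fun x _ => hg x) (fun x _ => hg x)
  · simp only [coe_filter, Set.mem_ofPred_eq, comp_apply] at hx ⊢
    exact ⟨hA _ hx.1, fun h => hx.2 (by rw [h, hg])⟩
  · simp only [coe_filter, Set.mem_ofPred_eq, comp_apply] at hx ⊢
    exact ⟨hA _ hx.1, by rw [hg]; exact fun h => hx.2 (hg.injective h)⟩

lemma finite_sumInvolutions (A : Finset ℕ) (k : ℕ) (B : Set ℕ) :
    (sumInvolutions A k B).Finite := by
  refine Set.Finite.of_injOn (f := fun f (a : A) => f a) (t := {h | ∀ a, h a ∈ (A : Set ℕ)})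
    (fun f hf a => hf.1.apply_mem a.2) (fun f hf g hg hfg => funext fun x => ?_)
    (Set.Finite.pi' fun _ => A.finite_toSet)
  by_cases hx : x ∈ A
  · exact congrFun hfg ⟨x, hx⟩
  · rw [hf.1.eq_of_not_mem hx, hg.1.eq_of_not_mem hx]

-- swaps `2a` and `2a + 1`
def pairSwap (x : ℕ) : ℕ := 2 * (x / 2) + 1 - x % 2

lemma pairSwap_involutive : Involutive pairSwap := fun x => by unfold pairSwap; omega

lemma ncard_sumInvolutions_modEq_ncard_pairSwap_fixed (n k : ℕ) {B : Set ℕ}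
    (hB : ∀ m ∈ B, m % 2 = 1) :
    (sumInvolutions (range (2 * n)) k B).ncard ≡
      {f ∈ sumInvolutions (range (2 * n)) k B | pairSwap ∘ f ∘ pairSwap = f}.ncard [MOD 2] := by
  have hA : ∀ x ∈ range (2 * n), pairSwap x ∈ range (2 * n) := fun x hx => by
    simp only [mem_range, pairSwap] at hx ⊢; omega
  have hsum : ∀ c d, c + d ∈ B → pairSwap c + pairSwap d = c + d := fun c d h => by
    have := hB _ h; unfold pairSwap; omega
  refine Set.ncard_modEq_ncard_fixed_of_involutive (finite_sumInvolutions _ _ _)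
    (fun f => funext fun x => by simp only [comp_apply, pairSwap_involutive _]) fun f hf =>
      ⟨hf.1.conj pairSwap_involutive hA hsum, ?_⟩
  rw [card_moved_conj pairSwap_involutive hA]
  exact hf.2

-- `double g` maps the block `{2a, 2a+1}` to itself if `g a = a`, and else crosswise onto
-- `{2 g(a), 2 g(a) + 1}`
def double (g : ℕ → ℕ) (x : ℕ) : ℕ :=
  if g (x / 2) = x / 2 then x else 2 * g (x / 2) + 1 - x % 2

def halve (f : ℕ → ℕ) (a : ℕ) : ℕ := f (2 * a) / 2

lemma double_ne_iff (g : ℕ → ℕ) (x : ℕ) : double g x ≠ x ↔ g (x / 2) ≠ x / 2 := by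
  unfold double
  split_ifs with h
  · simp [h]
  · simp only [ne_eq, h, not_false_iff, iff_true]; omega

lemma halve_double (g : ℕ → ℕ) : halve (double g) = g := funext fun a => by
  have ha : 2 * a / 2 = a := by omega
  unfold halve double
  rw [ha]; split_ifs <;> omega

lemma pairSwap_conj_double (g : ℕ → ℕ) : pairSwap ∘ double g ∘ pairSwap = double g :=
  funext fun x => by
    have hx : pairSwap x / 2 = x / 2 := by unfold pairSwap; omega
    simp only [comp_apply, double, hx]
    split_ifs <;> unfold pairSwap <;> omega

lemma card_filter_range_two_mul_div_two (n : ℕ) (p : ℕ → Prop) [DecidablePred p] :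
    #{x ∈ range (2 * n) | p (x / 2)} = 2 * #{a ∈ range n | p a} := by
  induction n with
  | zero => simp
  | succ n ih =>
    rw [show 2 * (n + 1) = 2 * n + 1 + 1 by ring, range_add_one, range_add_one, range_add_one,
      filter_insert, filter_insert, filter_insert, show (2 * n + 1) / 2 = n by omega,
      show 2 * n / 2 = n by omega]
    by_cases hp : p n
    · simp only [hp, if_true]
      rw [card_insert_of_notMem (by simp), card_insert_of_notMem (by simp),
        card_insert_of_notMem (by simp), ih]
      ring
    · simp only [hp, if_false, ih]

lemma card_moved_double (n : ℕ) (g : ℕ → ℕ) :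
    #{x ∈ range (2 * n) | double g x ≠ x} = 2 * #{a ∈ range n | g a ≠ a} := by
  simp only [double_ne_iff]
  exact card_filter_range_two_mul_div_two n fun a => g a ≠ a

lemma double_two_mul_add (g : ℕ → ℕ) (a : ℕ) {r : ℕ} (hr : r < 2) :
    double g (2 * a + r) = if g a = a then 2 * a + r else 2 * g a + 1 - r := by
  simp only [double, show (2 * a + r) / 2 = a by omega, show (2 * a + r) % 2 = r by omega]

lemma exists_two_mul_add (x : ℕ) : ∃ a r, r < 2 ∧ x = 2 * a + r :=
  ⟨x / 2, x % 2, Nat.mod_lt _ two_pos, (Nat.div_add_mod x 2).symm⟩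

lemma isSumInvolution_double_iff (n : ℕ) (B : Set ℕ) (g : ℕ → ℕ) :
    IsSumInvolution (range (2 * n)) B (double g) ↔
      IsSumInvolution (range n) ((2 * · + 1) ⁻¹' B) g := by
  have hdouble (a) : double g (2 * a) = if g a = a then 2 * a else 2 * g a + 1 := by
    simpa using double_two_mul_add g a two_pos
  constructor
  · intro h
    refine ⟨fun a => ?_, fun a ha => ?_, fun a ha => ?_⟩
    · by_cases ha : g a = a
      · rw [ha, ha]
      · have hinv := h.involutive (2 * a)
        rw [hdouble, if_neg ha, double_two_mul_add _ _ one_lt_two] at hinv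
        split_ifs at hinv <;> omega
    · have := h.mem_of_ne (2 * a) (by rw [hdouble, if_neg ha]; omega)
      simp only [mem_range] at this ⊢; omega
    · have := h.add_mem (2 * a) (by rw [hdouble, if_neg ha]; omega)
      rw [hdouble, if_neg ha] at this
      simpa only [Set.mem_preimage, mul_add, add_assoc] using this
  · intro h
    refine ⟨fun x => ?_, fun x hx => ?_, fun x hx => ?_⟩
    · obtain ⟨a, r, hr, rfl⟩ := exists_two_mul_add x
      by_cases ha : g a = a
      · rw [double_two_mul_add _ _ hr, if_pos ha, double_two_mul_add _ _ hr, if_pos ha]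
      · rw [double_two_mul_add _ _ hr, if_neg ha, show 2 * g a + 1 - r = 2 * g a + (1 - r) by omega,
          double_two_mul_add _ _ (by omega), h.involutive, if_neg (Ne.symm ha)]
        omega
    · rw [double_ne_iff] at hx
      have := h.mem_of_ne _ hx
      simp only [mem_range] at this ⊢; omega
    · obtain ⟨a, r, hr, rfl⟩ := exists_two_mul_add x
      rw [double_two_mul_add _ _ hr] at hx ⊢
      have ha : g a ≠ a := fun ha => hx (if_pos ha)
      rw [if_neg ha, show 2 * a + r + (2 * g a + 1 - r) = 2 * (a + g a) + 1 by omega]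
      exact h.add_mem a ha

lemma apply_pairSwap_of_conj {f : ℕ → ℕ} (hc : pairSwap ∘ f ∘ pairSwap = f) (x : ℕ) :
    f (pairSwap x) = pairSwap (f x) := by
  conv_lhs => rw [← hc]
  simp only [comp_apply, pairSwap_involutive x]

lemma double_halve {B : Set ℕ} (hB : ∀ m ∈ B, m % 4 = 3) {f : ℕ → ℕ}
    (hf : ∀ c, f c ≠ c → c + f c ∈ B) (hc : pairSwap ∘ f ∘ pairSwap = f) :
    double (halve f) = f := funext fun x => by
  obtain ⟨a, r, hr, rfl⟩ := exists_two_mul_add x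
  have hodd : f (2 * a + 1) = pairSwap (f (2 * a)) := by
    rw [← apply_pairSwap_of_conj hc]; congr 1; unfold pairSwap; omega
  rw [double_two_mul_add _ _ hr, halve]
  by_cases hfix : f (2 * a) = 2 * a
  · rw [hfix, if_pos (by omega)]
    interval_cases r
    · exact hfix.symm
    · rw [hodd, hfix]; unfold pairSwap; omega
  · -- `2a + f(2a) ≡ 3 (mod 4)` forces `f(2a) = 2b + 1` with `b ≠ a`
    have := hB _ (hf _ hfix)
    rw [if_neg (by omega)]
    interval_cases r
    · rw [add_zero]; omega
    · rw [hodd]; unfold pairSwap; omega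

lemma ncard_pairSwap_fixed_eq_ncard_halves {B : Set ℕ} (hB : ∀ m ∈ B, m % 4 = 3) (n k : ℕ) :
    {f ∈ sumInvolutions (range (2 * n)) k B | pairSwap ∘ f ∘ pairSwap = f}.ncard =
      {g | IsSumInvolution (range n) ((2 * · + 1) ⁻¹' B) g ∧
        #{a ∈ range n | g a ≠ a} = k}.ncard := by
  refine Set.BijOn.ncard_eq (f := halve) (Set.InvOn.bijOn (f' := double)
    ⟨fun f hf => double_halve hB hf.1.1.add_mem hf.2, fun g _ => halve_double g⟩
    (fun f hf => ?_) fun g hg => ?_)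
  · have hf' := double_halve hB hf.1.1.add_mem hf.2
    refine ⟨(isSumInvolution_double_iff n B _).1 (by rw [hf']; exact hf.1.1), ?_⟩
    have := card_moved_double n (halve f)
    rw [hf', hf.1.2] at this
    omega
  · exact ⟨⟨(isSumInvolution_double_iff n B g).2 hg.1, by rw [card_moved_double, hg.2]⟩,
      pairSwap_conj_double g⟩

-- `β ∘ g ∘ β⁻¹` on `P = range β` (where `β (m / 2) = m`), the identity off `P`
def liftBeta (g : ℕ → ℕ) (m : ℕ) : ℕ := if beta (m / 2) = m then beta (g (m / 2)) else m

def pullBeta (h : ℕ → ℕ) (a : ℕ) : ℕ := h (beta a) / 2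

lemma liftBeta_beta (g : ℕ → ℕ) (a : ℕ) : liftBeta g (beta a) = beta (g a) := by
  simp [liftBeta, beta_div_two]

lemma liftBeta_of_ne {m : ℕ} (g : ℕ → ℕ) (hm : beta (m / 2) ≠ m) : liftBeta g m = m :=
  if_neg hm

lemma pullBeta_liftBeta (g : ℕ → ℕ) : pullBeta (liftBeta g) = g :=
  funext fun a => by rw [pullBeta, liftBeta_beta, beta_div_two]

lemma liftBeta_pullBeta {s : Finset ℕ} {B : Set ℕ} {h : ℕ → ℕ}
    (hh : IsSumInvolution (s.image beta) B h) : liftBeta (pullBeta h) = h := funext fun m => by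
  by_cases hm : beta (m / 2) = m
  · have hhm : beta (h m / 2) = h m := by
      by_cases hmem : m ∈ s.image beta
      · obtain ⟨c, -, hc⟩ := mem_image.1 (hh.apply_mem hmem)
        rw [← hc, beta_div_two]
      · rwa [hh.eq_of_not_mem hmem]
    rw [liftBeta, if_pos hm, pullBeta, hm, hhm]
  · rw [liftBeta_of_ne _ hm, hh.eq_of_not_mem fun hmem => ?_]
    obtain ⟨c, -, rfl⟩ := mem_image.1 hmem
    exact hm (by rw [beta_div_two])

lemma liftBeta_ne_iff (g : ℕ → ℕ) (m : ℕ) : liftBeta g m ≠ m ↔ ∃ a, beta a = m ∧ g a ≠ a := by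
  constructor
  · intro hm
    by_cases h : beta (m / 2) = m
    · exact ⟨m / 2, h, fun ha => hm (by rw [liftBeta, if_pos h, ha, h])⟩
    · exact absurd (liftBeta_of_ne g h) hm
  · rintro ⟨a, rfl, ha⟩
    rw [liftBeta_beta]; exact beta_injective.ne ha

lemma card_moved_liftBeta (s : Finset ℕ) (g : ℕ → ℕ) :
    #{m ∈ s.image beta | liftBeta g m ≠ m} = #{a ∈ s | g a ≠ a} := by
  rw [filter_image, card_image_of_injective _ beta_injective]
  simp only [liftBeta_beta, beta_injective.ne_iff]

lemma isSumInvolution_liftBeta_iff {B : Set ℕ} (hB : ∀ m ∈ B, m % 4 = 3) (s : Finset ℕ)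
    (g : ℕ → ℕ) :
    IsSumInvolution (s.image beta) B (liftBeta g) ↔
      IsSumInvolution s ((2 * · + 1) ⁻¹' B) g := by
  constructor
  · intro h
    have hne {a : ℕ} (ha : g a ≠ a) : liftBeta g (beta a) ≠ beta a := by
      rw [liftBeta_beta]; exact beta_injective.ne ha
    refine ⟨fun a => beta_injective ?_, fun a ha => ?_, fun a ha => ?_⟩
    · simpa only [liftBeta_beta] using h.involutive (beta a)
    · exact beta_injective.mem_finset_image.1 (h.mem_of_ne _ (hne ha))
    · simpa only [liftBeta_beta, beta_add_beta_mem_iff hB, Set.mem_preimage] using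
        h.add_mem _ (hne ha)
  · intro h
    refine ⟨fun m => ?_, fun m hm => ?_, fun m hm => ?_⟩
    · by_cases hm : beta (m / 2) = m
      · rw [← hm, liftBeta_beta, liftBeta_beta, h.involutive]
      · rw [liftBeta_of_ne _ hm, liftBeta_of_ne _ hm]
    · obtain ⟨a, rfl, ha⟩ := (liftBeta_ne_iff g m).1 hm
      exact mem_image_of_mem beta (h.mem_of_ne a ha)
    · obtain ⟨a, rfl, ha⟩ := (liftBeta_ne_iff g m).1 hm
      rw [liftBeta_beta, beta_add_beta_mem_iff hB]
      exact h.add_mem a ha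

lemma ncard_sumInvolutions_image_beta {B : Set ℕ} (hB : ∀ m ∈ B, m % 4 = 3) (s : Finset ℕ)
    (k : ℕ) :
    (sumInvolutions (s.image beta) k B).ncard =
      (sumInvolutions s k ((2 * · + 1) ⁻¹' B)).ncard := by
  refine Set.BijOn.ncard_eq (f := pullBeta) (Set.InvOn.bijOn (f' := liftBeta)
    ⟨fun h hh => liftBeta_pullBeta hh.1, fun g _ => pullBeta_liftBeta g⟩
    (fun h hh => ?_) fun g hg => ?_)
  · rw [← liftBeta_pullBeta hh.1] at hh
    exact ⟨(isSumInvolution_liftBeta_iff hB s _).1 hh.1, by rw [← card_moved_liftBeta, hh.2]⟩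
  · exact ⟨(isSumInvolution_liftBeta_iff hB s g).2 hg.1, by rw [card_moved_liftBeta, hg.2]⟩

lemma IsSumInvolution.setOf_card_moved_eq_empty_of_odd {A : Finset ℕ} {B : Set ℕ} {k : ℕ}
    (hk : Odd k) : {g | IsSumInvolution A B g ∧ #{a ∈ A | g a ≠ a} = k} = ∅ :=
  Set.eq_empty_of_forall_notMem fun _ hg =>
    Nat.not_even_iff_odd.2 hk (hg.2 ▸ hg.1.even_card_moved)

theorem stmt_12_general (n k : ℕ) :
    (Odd k → mu (Finset.range (2 * n)) k Jstar ≡ 0 [MOD 2]) ∧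
    (Even k → mu (Finset.range (2 * n)) k Jstar ≡ mu (smallest Pset n) (k / 2) Jstar [MOD 2]) := by
  have hB : ∀ m ∈ Jstar, m % 4 = 3 := fun m hm => mod_four_of_mem_Jstar hm
  have hpar := ncard_sumInvolutions_modEq_ncard_pairSwap_fixed n k fun m hm => by
    have := hB m hm; omega
  rw [← mu_eq_ncard, ncard_pairSwap_fixed_eq_ncard_halves hB] at hpar
  refine ⟨fun hk => ?_, fun hk => ?_⟩
  · rwa [IsSumInvolution.setOf_card_moved_eq_empty_of_odd hk, Set.ncard_empty] at hpar
  · obtain ⟨r, rfl⟩ := hk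
    rwa [smallest_Pset, show (r + r) / 2 = r by omega, mu_eq_ncard ((range n).image beta),
      ncard_sumInvolutions_image_beta hB, sumInvolutions, two_mul r]

theorem stmt_12 (n k : ℕ) (hn : 1 ≤ n) :
    (Odd k → mu (Finset.range (2 * n)) k Jstar ≡ 0 [MOD 2]) ∧
    (Even k → mu (Finset.range (2 * n)) k Jstar ≡ mu (smallest Pset n) (k / 2) Jstar [MOD 2]) :=
  stmt_12_general n k
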